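/- Let v : 2^N → ℝ be supermodular on the subsets of a finite set N with |N| = n ≥ 1 and v(∅) = 0. Then the Shapley value vector (Sh_i(v))_{i∈N} lies in the core: for every coalition C ⊆ N, ∑_{i∈C} Sh_i(v) ≥ v(C). -/

import Mathlib

/-!
Average over the `n!` orderings of the agents. The number of orderings in which the predecessors
of `i` form a given coalition `S ∌ i` is `|S|! (n - |S| - 1)!`, so `Sh_i(v)` is the mean, over all
orderings, of the marginal contribution of `i` to its predecessors. For a fixed ordering these
marginal contributions form a core element: the contributions of the members of `C`, taken
relative to their predecessors inside `C`, telescope to `v C - v ∅`, and supermodularity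
(increasing marginal returns) makes each of them at most the contribution relative to all
predecessors. The core is convex, so the mean lies in it too.
-/

noncomputable def shapley {α : Type*} [Fintype α] [DecidableEq α]
    (v : Finset α → ℝ) (i : α) : ℝ :=
  ∑ C ∈ (Finset.univ.erase i).powerset,
    ((C.card.factorial : ℝ) * ((Fintype.card α - C.card - 1).factorial : ℝ) /
        ((Fintype.card α).factorial : ℝ)) *
      (v (insert i C) - v C)

open Finset Function Equiv Nat

theorem Fintype.card_equiv_comp_eq {α β ι : Type*} [Fintype α] [Fintype β] [DecidableEq α]
    [DecidableEq β] [Fintype ι] [DecidableEq ι] (f : α → ι) (g : β → ι)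
    (hfg : ∀ c, Fintype.card {a // f a = c} = Fintype.card {b // g b = c}) :
    Fintype.card {e : α ≃ β // g ∘ e = f} = ∏ c, (Fintype.card {a // f a = c})! := by
  let e₀ : α ≃ β := ofFiberEquiv fun c => Fintype.equivOfCardEq (hfg c)
  have he₀ : g ∘ e₀ = f := funext (ofFiberEquiv_map _)
  rw [← DomMulAct.stabilizer_card f]
  refine Fintype.card_congr (subtypeEquiv (equivCongr (.refl α) e₀) fun τ => ?_).symm
  change f ∘ τ = f ↔ g ∘ e₀ ∘ τ = f
  rw [← comp_assoc, he₀]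

theorem Fintype.prod_ordering {M : Type*} [CommMonoid M] (f : Ordering → M) :
    ∏ c, f c = f .lt * f .eq * f .gt := by
  rw [show (univ : Finset Ordering) = {.lt, .eq, .gt} from rfl]
  simp [mul_assoc]

theorem Fin.card_compare_eq_lt {n : ℕ} (k : Fin n) :
    Fintype.card {j : Fin n // compare j k = .lt} = k := by
  simp [Fintype.card_subtype, compare_lt_iff_lt, filter_gt_eq_Iio]

theorem Fin.card_compare_eq_eq {n : ℕ} (k : Fin n) :
    Fintype.card {j : Fin n // compare j k = .eq} = 1 := by
  simp

theorem Fin.card_compare_eq_gt {n : ℕ} (k : Fin n) :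
    Fintype.card {j : Fin n // compare j k = .gt} = n - k - 1 := by
  simp [Fintype.card_subtype, compare_gt_iff_gt, filter_lt_eq_Ioi]
  omega

section Supermodular

variable {α : Type*} [DecidableEq α] {v : Finset α → ℝ}

theorem marginal_le_marginal_of_subset
    (hsm : ∀ C D : Finset α, v C + v D ≤ v (C ∪ D) + v (C ∩ D))
    {S T : Finset α} (hST : S ⊆ T) {i : α} (hi : i ∉ T) :
    v (insert i S) - v S ≤ v (insert i T) - v T := by
  have h := hsm (insert i S) T
  rw [insert_union, union_eq_right.2 hST, insert_inter_of_notMem hi,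
    inter_eq_left.2 hST] at h
  linarith

end Supermodular

section Predecessors

variable {α β : Type*} [Fintype α] [LinearOrder β] {π : α → β} {i a : α}

def predecessors (π : α → β) (i : α) : Finset α := {a | π a < π i}

@[simp]
theorem mem_predecessors : a ∈ predecessors π i ↔ π a < π i := by
  simp [predecessors]

theorem notMem_predecessors_self : i ∉ predecessors π i := by
  simp

theorem card_predecessors (π : α ≃ Fin (Fintype.card α)) (i : α) :
    #(predecessors π i) = π i := by
  rw [← Fin.card_Iio (π i)]
  exact card_equiv π fun a => by simp

variable [DecidableEq α]

def marginalVector (v : Finset α → ℝ) (π : α → β) (i : α) : ℝ :=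
  v (insert i (predecessors π i)) - v (predecessors π i)

theorem sum_marginal_predecessors_inter (hπ : Injective π) (v : Finset α → ℝ) (C : Finset α) :
    ∑ i ∈ C, (v (insert i (predecessors π i ∩ C)) - v (predecessors π i ∩ C)) = v C - v ∅ := by
  induction C using Finset.induction_on_max_value π with
  | empty => simp
  | insert a s ha hmax ih =>
    have hpred_a : predecessors π a ∩ insert a s = s := by
      ext x
      simp only [mem_inter, mem_predecessors, mem_insert]
      constructor
      · rintro ⟨hx, rfl | hxs⟩
        · exact absurd hx (lt_irrefl _)
        · exact hxs
      · intro hxs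
        exact ⟨(hmax x hxs).lt_of_ne (hπ.ne (ne_of_mem_of_not_mem hxs ha)), .inr hxs⟩
    have hpred_s : ∀ x ∈ s, predecessors π x ∩ insert a s = predecessors π x ∩ s := fun x hx => by
      rw [inter_insert_of_notMem (by simpa using hmax x hx)]
    rw [sum_insert ha, hpred_a, sum_congr rfl fun x hx => by rw [hpred_s x hx], ih]
    ring

theorem sub_le_sum_marginalVector {v : Finset α → ℝ}
    (hsm : ∀ C D : Finset α, v C + v D ≤ v (C ∪ D) + v (C ∩ D)) (hπ : Injective π)
    (C : Finset α) : v C - v ∅ ≤ ∑ i ∈ C, marginalVector v π i := by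
  rw [← sum_marginal_predecessors_inter hπ v C]
  gcongr with i
  exact marginal_le_marginal_of_subset hsm inter_subset_left notMem_predecessors_self

end Predecessors

section Orderings

variable {α : Type*} [Fintype α] [DecidableEq α] {i a : α} {C : Finset α}

/-- An ordering `π` has `C` as the predecessor set of `i` iff it sends `C`, `{i}` and the remaining
agents below, to, and above position `#C`; this turns the count into one of fibre-preserving
bijections. -/
def coalitionProfile (i : α) (C : Finset α) (a : α) : Ordering :=
  if a ∈ C then .lt else if a = i then .eq else .gt

omit [Fintype α] in
theorem coalitionProfile_eq_lt : coalitionProfile i C a = .lt ↔ a ∈ C := by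
  unfold coalitionProfile; split_ifs <;> simp_all

omit [Fintype α] in
theorem coalitionProfile_eq_eq (hi : i ∉ C) : coalitionProfile i C a = .eq ↔ a = i := by
  unfold coalitionProfile; split_ifs with haC <;> simp_all
  rintro rfl; exact hi haC

omit [Fintype α] in
theorem coalitionProfile_eq_gt : coalitionProfile i C a = .gt ↔ a ∉ insert i C := by
  unfold coalitionProfile; split_ifs <;> simp_all

theorem card_coalitionProfile_fiber (hi : i ∉ C) (hk : #C < Fintype.card α) (c : Ordering) :
    Fintype.card {a // coalitionProfile i C a = c} =
      Fintype.card {j : Fin (Fintype.card α) // compare j ⟨#C, hk⟩ = c} := by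
  cases c
  · rw [Fin.card_compare_eq_lt,
      Fintype.card_congr (subtypeEquivRight fun _ => coalitionProfile_eq_lt), Fintype.card_coe]
  · rw [Fin.card_compare_eq_eq,
      Fintype.card_congr (subtypeEquivRight fun _ => coalitionProfile_eq_eq hi),
      Fintype.card_unique]
  · rw [Fin.card_compare_eq_gt,
      Fintype.card_congr (subtypeEquivRight fun _ => coalitionProfile_eq_gt),
      Fintype.card_subtype_compl, Fintype.card_coe, card_insert_of_notMem hi]
    dsimp only
    omega

theorem predecessors_eq_iff (hi : i ∉ C) (hk : #C < Fintype.card α)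
    (π : α ≃ Fin (Fintype.card α)) :
    predecessors π i = C ↔ (compare · ⟨#C, hk⟩) ∘ π = coalitionProfile i C := by
  constructor
  · rintro rfl
    have hπi : π i = ⟨#(predecessors π i), hk⟩ := Fin.ext (card_predecessors π i).symm
    funext a
    rw [comp_apply, ← hπi, coalitionProfile]
    split_ifs with haC hai
    · exact compare_lt_iff_lt.2 (mem_predecessors.1 haC)
    · exact compare_eq_iff_eq.2 (congrArg π hai)
    · refine compare_gt_iff_gt.2 ((not_lt.1 fun h => haC (mem_predecessors.2 h)).lt_of_ne ?_)
      exact π.injective.ne (Ne.symm hai)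
  · intro h
    have hπi : π i = ⟨#C, hk⟩ := by
      rw [← compare_eq_iff_eq, ← comp_apply (f := (compare · _)), h, coalitionProfile_eq_eq hi]
    ext a
    rw [mem_predecessors, hπi, ← compare_lt_iff_lt, ← coalitionProfile_eq_lt, ← h, comp_apply]

theorem card_predecessors_eq (hi : i ∉ C) :
    #{π : α ≃ Fin (Fintype.card α) | predecessors π i = C} =
      (#C)! * (Fintype.card α - #C - 1)! := by
  have hk : #C < Fintype.card α := card_lt_univ_of_notMem hi
  rw [← Fintype.card_subtype, Fintype.card_congr (subtypeEquivRight (predecessors_eq_iff hi hk)),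
    Fintype.card_equiv_comp_eq _ _ (card_coalitionProfile_fiber hi hk), Fintype.prod_ordering]
  simp only [card_coalitionProfile_fiber hi hk, Fin.card_compare_eq_lt, Fin.card_compare_eq_eq,
    Fin.card_compare_eq_gt]
  simp

theorem shapley_eq_average_marginalVector (v : Finset α → ℝ) (i : α) :
    shapley v i = (∑ π : α ≃ Fin (Fintype.card α), marginalVector v π i) / (Fintype.card α)! := by
  have hmaps : ∀ π ∈ (univ : Finset (α ≃ Fin (Fintype.card α))),
      predecessors π i ∈ (univ.erase i).powerset := fun π _ =>
    mem_powerset.2 fun a ha =>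
      mem_erase.2 ⟨ne_of_mem_of_not_mem ha notMem_predecessors_self, mem_univ a⟩
  rw [← sum_fiberwise_of_maps_to hmaps, sum_div, shapley]
  refine sum_congr rfl fun C hC => ?_
  have hi : i ∉ C := fun h => (mem_erase.1 (mem_powerset.1 hC h)).1 rfl
  rw [sum_congr rfl fun π hπ => by rw [marginalVector, (mem_filter.1 hπ).2], sum_const,
    card_predecessors_eq hi, nsmul_eq_mul]
  push_cast
  ring

end Orderings

theorem stmt_12_general {α : Type*} [Fintype α] [DecidableEq α]
    (v : Finset α → ℝ)
    (hsm : ∀ C D : Finset α, v C + v D ≤ v (C ∪ D) + v (C ∩ D))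
    (h0 : v ∅ = 0)
    (C : Finset α) :
    v C ≤ ∑ i ∈ C, shapley v i := by
  have hcard : Fintype.card (α ≃ Fin (Fintype.card α)) = (Fintype.card α)! :=
    Fintype.card_equiv (Fintype.equivFin α)
  simp_rw [shapley_eq_average_marginalVector, ← sum_div]
  rw [sum_comm, le_div_iff₀ (by positivity)]
  calc v C * (Fintype.card α)! = ∑ _π : α ≃ Fin (Fintype.card α), (v C - v ∅) := by
        rw [sum_const, Finset.card_univ, hcard, nsmul_eq_mul, h0, sub_zero, mul_comm]
    _ ≤ _ := sum_le_sum fun π _ => sub_le_sum_marginalVector hsm π.injective C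

/-- for a supermodular `v` with `v(∅) = 0`, the Shapley value vector lies
in the core: `∑_{i∈C} Sh_i(v) ≥ v(C)` for every coalition `C ⊆ N`. -/
theorem stmt_12 {α : Type*} [Fintype α] [DecidableEq α] [Nonempty α]
    (v : Finset α → ℝ)
    (hsm : ∀ C D : Finset α, v C + v D ≤ v (C ∪ D) + v (C ∩ D))
    (h0 : v ∅ = 0)
    (C : Finset α) :
    v C ≤ ∑ i ∈ C, shapley v i :=
  stmt_12_general v hsm h0 C
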